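/- arXiv:2210.11427 — 6 statements merged into one kernel-verified Lean document; each statement's English description precedes it below -/
import Mathlib

section
/- Let d ≥ 1, let 0 < α' ≤ 1 and 0 < α ≤ 1, and let x, ε ∈ ℝ^d. Define the DDIM update x' = √α' · (x − √(1−α) ε)/√α + √(1−α') ε. Then, in the rescaled variables u = x/√α, u' = x'/√α' and noise levels τ = √(1/α − 1), τ' = √(1/α' − 1), the update satisfies u' = u + (τ' − τ) ε; i.e., one DDIM sampling step is exactly one Euler step of size τ' − τ for the ODE du = ε dτ. -/
/-! The noise level is `τ = √(1 - α) / √α` (for `α ≤ 0` both sides are the junk value `0`),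
so dividing the DDIM update by `√α'` gives
`x / √α - (√(1 - α) / √α) ε + (√(1 - α') / √α') ε = u + (τ' - τ) ε`. -/

theorem Real.sqrt_one_div_sub_one (α : ℝ) : √(1 / α - 1) = √(1 - α) / √α := by
  rcases le_or_gt α 0 with hα | hα
  · have : 1 / α ≤ 0 := one_div_nonpos.2 hα
    rw [Real.sqrt_eq_zero'.2 hα, div_zero, Real.sqrt_eq_zero'.2 (by linarith)]
  · rw [← Real.sqrt_div' _ hα.le]
    congr 1
    field_simp

theorem inv_smul_smul_inv_smul_sub_add {K E : Type*} [Field K] [AddCommGroup E] [Module K E]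
    (a a' s s' : K) (ha' : a' ≠ 0) (x ε : E) :
    a'⁻¹ • (a' • (a⁻¹ • (x - s • ε)) + s' • ε) = a⁻¹ • x + (s' / a' - s / a) • ε := by
  rw [smul_add, inv_smul_smul₀ ha', smul_sub, smul_smul, smul_smul, sub_smul]
  simp only [div_eq_inv_mul, mul_comm a⁻¹ s, mul_comm a'⁻¹ s']
  abel

theorem ddim_step_is_euler_step_general
    (d : ℕ)
    (α α' : ℝ) (hα' : 0 < α')
    (x ε x' : EuclideanSpace ℝ (Fin d))
    (hx' : x' = Real.sqrt α' • ((Real.sqrt α)⁻¹ • (x - Real.sqrt (1 - α) • ε))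
              + Real.sqrt (1 - α') • ε) :
    (Real.sqrt α')⁻¹ • x'
      = (Real.sqrt α)⁻¹ • x
        + (Real.sqrt (1 / α' - 1) - Real.sqrt (1 / α - 1)) • ε := by
  rw [hx', Real.sqrt_one_div_sub_one, Real.sqrt_one_div_sub_one]
  exact inv_smul_smul_inv_smul_sub_add _ _ _ _ (Real.sqrt_ne_zero'.2 hα') x ε

/-- One DDIM sampling step is exactly one Euler step of size τ' − τ for the ODE du = ε dτ:
in rescaled variables u = x/√α, u' = x'/√α' and noise levels τ = √(1/α − 1),
τ' = √(1/α' − 1), the DDIM update x' = √α'·(x − √(1−α) ε)/√α + √(1−α') ε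
satisfies u' = u + (τ' − τ) • ε. -/
theorem ddim_step_is_euler_step
    (d : ℕ) (hd : 1 ≤ d)
    (α α' : ℝ) (hα : 0 < α) (hα1 : α ≤ 1) (hα' : 0 < α') (hα'1 : α' ≤ 1)
    (x ε x' : EuclideanSpace ℝ (Fin d))
    (hx' : x' = Real.sqrt α' • ((Real.sqrt α)⁻¹ • (x - Real.sqrt (1 - α) • ε))
              + Real.sqrt (1 - α') • ε) :
    (Real.sqrt α')⁻¹ • x'
      = (Real.sqrt α)⁻¹ • x
        + (Real.sqrt (1 / α' - 1) - Real.sqrt (1 / α - 1)) • ε :=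
  ddim_step_is_euler_step_general d α α' hα' x ε x' hx'
end

section
/- Let τ ≥ 0, κ ≥ 0, K ≥ 0, and let w : [0,τ] → ℝ be continuous and nonnegative. Suppose that for every t ∈ [0,τ], w(t) ≤ κ(τ − t) + ∫_t^τ (K/√(1+σ²)) w(σ) dσ. Then w(0) ≤ κ τ (τ + √(τ² + 1))^K. -/
open Set intervalIntegral MeasureTheory Real

/-!
With `F t = ∫_t^b k w` and `A t = ∫_t^b k`, the hypothesis `w ≤ C + F` together with `k ≥ 0`
makes `(C + F) e^{-A}` nondecreasing, since its derivative is `k (C + F - w) e^{-A}`. Comparing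
its values at the two endpoints gives `w a ≤ C + F a ≤ C e^{A a}`. For `k σ = K / √(1 + σ²)`
the exponent is `K arsinh τ`, and `e^{arsinh τ} = τ + √(τ² + 1)`.
-/

section IntegralLeft

variable {E : Type*} [NormedAddCommGroup E] [NormedSpace ℝ E] {f : ℝ → E} {a b : ℝ}

theorem continuousOn_integral_left_of_continuousOn (hab : a ≤ b)
    (hf : ContinuousOn f (Icc a b)) :
    ContinuousOn (fun t => ∫ σ in t..b, f σ) (Icc a b) := by
  have hint : IntegrableOn f (uIcc a b) := by
    rw [uIcc_of_le hab]
    exact hf.integrableOn_Icc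
  simpa only [uIcc_of_le hab] using continuousOn_primitive_interval_left hint

theorem hasDerivAt_integral_left_of_continuousOn [CompleteSpace E]
    (hf : ContinuousOn f (Icc a b)) {x : ℝ} (hx : x ∈ Ioo a b) :
    HasDerivAt (fun t => ∫ σ in t..b, f σ) (-f x) x :=
  integral_hasDerivAt_left
    ((hf.mono (Icc_subset_Icc_left hx.1.le)).intervalIntegrable_of_Icc hx.2.le)
    ((hf.mono Ioo_subset_Icc_self).stronglyMeasurableAtFilter isOpen_Ioo x hx)
    (hf.continuousAt (Icc_mem_nhds hx.1 hx.2))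

end IntegralLeft

theorem le_mul_exp_integral_of_le_add_integral {a b C : ℝ} {k w : ℝ → ℝ} (hab : a ≤ b)
    (hk : ContinuousOn k (Icc a b)) (hk₀ : ∀ t ∈ Icc a b, 0 ≤ k t)
    (hw : ContinuousOn w (Icc a b))
    (h : ∀ t ∈ Icc a b, w t ≤ C + ∫ σ in t..b, k σ * w σ) :
    w a ≤ C * exp (∫ σ in a..b, k σ) := by
  set F : ℝ → ℝ := fun t => ∫ σ in t..b, k σ * w σ
  set A : ℝ → ℝ := fun t => ∫ σ in t..b, k σ
  have hkw : ContinuousOn (fun σ => k σ * w σ) (Icc a b) := hk.mul hw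
  have hmono : MonotoneOn (fun t => (C + F t) * exp (-A t)) (Icc a b) := by
    refine monotoneOn_of_hasDerivWithinAt_nonneg
      (f' := fun x => k x * (C + F x - w x) * exp (-A x)) (convex_Icc a b) ?_ ?_ ?_
    · exact (continuousOn_const.add (continuousOn_integral_left_of_continuousOn hab hkw)).mul
        (continuousOn_integral_left_of_continuousOn hab hk).neg.rexp
    · intro x hx
      rw [interior_Icc] at hx
      have hF := (hasDerivAt_integral_left_of_continuousOn hkw hx).const_add C
      have hA := (hasDerivAt_integral_left_of_continuousOn hk hx).neg.exp
      refine (hF.mul hA).hasDerivWithinAt.congr_deriv ?_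
      simp only [Pi.neg_apply, F, A]
      ring
    · intro x hx
      have hx' := interior_subset hx
      exact mul_nonneg (mul_nonneg (hk₀ x hx') (sub_nonneg.2 (h x hx'))) (exp_pos _).le
  have hends := hmono (left_mem_Icc.2 hab) (right_mem_Icc.2 hab) hab
  simp only [F, A, integral_same, add_zero, neg_zero, exp_zero, mul_one] at hends
  calc w a ≤ C + F a := h a (left_mem_Icc.2 hab)
    _ ≤ C * exp (A a) := by
      rwa [exp_neg, ← div_eq_mul_inv, div_le_iff₀ (exp_pos _)] at hends

theorem integral_inv_sqrt_one_add_sq (a b : ℝ) :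
    ∫ x in a..b, (√(1 + x ^ 2))⁻¹ = arsinh b - arsinh a :=
  integral_eq_sub_of_hasDerivAt (fun x _ => hasDerivAt_arsinh x) <|
    ((by fun_prop : Continuous fun x : ℝ => √(1 + x ^ 2)).inv₀ fun x =>
      (sqrt_pos.2 (by positivity)).ne').intervalIntegrable _ _

theorem exp_mul_arsinh (K x : ℝ) : exp (K * arsinh x) = (x + √(1 + x ^ 2)) ^ K := by
  rw [← exp_arsinh, rpow_def_of_pos (exp_pos _), log_exp, mul_comm]

theorem gronwall_reverse_integral_form_general
    (τ κ K : ℝ) (hτ : 0 ≤ τ) (hκ : 0 ≤ κ) (hK : 0 ≤ K)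
    (w : ℝ → ℝ)
    (hw : ContinuousOn w (Set.Icc 0 τ))
    (hineq : ∀ t ∈ Set.Icc (0 : ℝ) τ,
      w t ≤ κ * (τ - t) + ∫ σ in t..τ, (K / Real.sqrt (1 + σ ^ 2)) * w σ) :
    w 0 ≤ κ * τ * (τ + Real.sqrt (τ ^ 2 + 1)) ^ K := by
  have hk : Continuous fun σ : ℝ => K / √(1 + σ ^ 2) :=
    continuous_const.div (by fun_prop) fun σ => (sqrt_pos.2 (by positivity)).ne'
  have hle : ∀ t ∈ Icc (0 : ℝ) τ, w t ≤ κ * τ + ∫ σ in t..τ, K / √(1 + σ ^ 2) * w σ :=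
    fun t ht => (hineq t ht).trans <| by
      gcongr
      linarith [ht.1]
  have hgron := le_mul_exp_integral_of_le_add_integral hτ hk.continuousOn
    (fun σ _ => by positivity) hw hle
  simp_rw [div_eq_mul_inv] at hgron
  rwa [intervalIntegral.integral_const_mul, integral_inv_sqrt_one_add_sq, arsinh_zero, sub_zero,
    exp_mul_arsinh, add_comm 1] at hgron

/-- Reversed-time Grönwall inequality with kernel `K/√(1+σ²)` (integral form):
if a continuous nonnegative `w` on `[0,τ]` satisfies
`w t ≤ κ (τ − t) + ∫_t^τ (K/√(1+σ²)) w σ dσ` for all `t ∈ [0,τ]`, then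
`w 0 ≤ κ τ (τ + √(τ²+1))^K`. -/
theorem gronwall_reverse_integral_form
    (τ κ K : ℝ) (hτ : 0 ≤ τ) (hκ : 0 ≤ κ) (hK : 0 ≤ K)
    (w : ℝ → ℝ)
    (hw : ContinuousOn w (Set.Icc 0 τ))
    (hnn : ∀ t ∈ Set.Icc (0 : ℝ) τ, 0 ≤ w t)
    (hineq : ∀ t ∈ Set.Icc (0 : ℝ) τ,
      w t ≤ κ * (τ - t) + ∫ σ in t..τ, (K / Real.sqrt (1 + σ ^ 2)) * w σ) :
    w 0 ≤ κ * τ * (τ + Real.sqrt (τ ^ 2 + 1)) ^ K :=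
  gronwall_reverse_integral_form_general τ κ K hτ hκ hK w hw hineq
end

section
/- Let d ≥ 1, τ ≥ 0, K₁ ≥ 0, κ₂ ≥ 0. Let g : ℝ^d × [0,τ] → ℝ^d be such that for every σ ∈ [0,τ], the map x ↦ g(x,σ) is (K₁/√(1+σ²))-Lipschitz. Let u, v : [0,τ] → ℝ^d be differentiable with u(τ) = v(τ), v'(σ) = g(v(σ), σ) for all σ, and ‖u'(σ) − g(u(σ), σ)‖ ≤ κ₂ for all σ ∈ [0,τ]. Then ‖u(0) − v(0)‖ ≤ κ₂ τ (τ + √(τ² + 1))^{K₁}. -/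
/-!
Reverse time: `e s = u (τ - s) - v (τ - s)` starts at `0` and satisfies
`‖e'‖ ≤ κ₂ + K s ‖e‖` with `K s = K₁ / √(1 + (τ - s)²) = φ' s` for `φ s = -K₁ arsinh (τ - s)`.
Gronwall's inequality with this time-dependent rate, proved by comparison with
`(δ + c (s - a)) exp (φ s - φ a)` for `c > κ₂` and then letting `c → κ₂`, gives
`‖e τ‖ ≤ κ₂ τ exp (K₁ arsinh τ)`, and `exp (arsinh τ) = τ + √(τ² + 1)`.
-/

open Set Filter Topology Real

section Gronwall

variable {E : Type*} [NormedAddCommGroup E] [NormedSpace ℝ E] {f f' : ℝ → E} {φ K : ℝ → ℝ}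
  {a b δ κ : ℝ}

theorem one_le_exp_sub_of_hasDerivAt_nonneg (hφ : ∀ s ∈ Icc a b, HasDerivAt φ (K s) s)
    (hK : ∀ s ∈ Icc a b, 0 ≤ K s) {x : ℝ} (hx : x ∈ Icc a b) : 1 ≤ exp (φ x - φ a) := by
  have hmono : MonotoneOn φ (Icc a b) := by
    refine monotoneOn_of_hasDerivWithinAt_nonneg (f' := K) (convex_Icc a b)
      (fun s hs => (hφ s hs).continuousAt.continuousWithinAt) (fun s hs => ?_) (fun s hs => ?_)
    all_goals rw [interior_Icc] at hs
    · exact (hφ s (Ioo_subset_Icc_self hs)).hasDerivWithinAt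
    · exact hK s (Ioo_subset_Icc_self hs)
  exact one_le_exp (sub_nonneg.2 (hmono (left_mem_Icc.2 (hx.1.trans hx.2)) hx hx.1))

theorem norm_le_gronwall_of_norm_deriv_right_le_of_lt (hf : ContinuousOn f (Icc a b))
    (hf' : ∀ s ∈ Ico a b, HasDerivWithinAt f (f' s) (Ici s) s) (ha : ‖f a‖ ≤ δ)
    (hφ : ∀ s ∈ Icc a b, HasDerivAt φ (K s) s) (hK : ∀ s ∈ Icc a b, 0 ≤ K s)
    (bound : ∀ s ∈ Ico a b, ‖f' s‖ ≤ κ + K s * ‖f s‖) {c : ℝ} (hc₀ : 0 ≤ c) (hc : κ < c) :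
    ∀ x ∈ Icc a b, ‖f x‖ ≤ (δ + c * (x - a)) * exp (φ x - φ a) := by
  set e : ℝ → ℝ := fun s => exp (φ s - φ a)
  have he : ∀ s ∈ Icc a b, HasDerivAt e (e s * K s) s := fun s hs =>
    ((hφ s hs).sub_const (φ a)).exp
  have hB : ∀ s ∈ Icc a b, HasDerivAt (fun s => (δ + c * (s - a)) * e s)
      (c * e s + K s * ((δ + c * (s - a)) * e s)) s := fun s hs => by
    refine ((((hasDerivAt_id' s).sub_const a).const_mul c).const_add δ
      |>.fun_mul (he s hs)).congr_deriv ?_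
    ring
  refine image_norm_le_of_norm_deriv_right_lt_deriv_boundary' hf hf' (by simpa [e] using ha)
    (fun s hs => (hB s hs).continuousAt.continuousWithinAt)
    (fun s hs => (hB s (Ico_subset_Icc_self hs)).hasDerivWithinAt) fun s hs hfs => ?_
  have he₁ := one_le_exp_sub_of_hasDerivAt_nonneg hφ hK (Ico_subset_Icc_self hs)
  -- `1 ≤ e s`, so `κ < c ≤ c * e s`
  calc ‖f' s‖ ≤ κ + K s * ‖f s‖ := bound s hs
    _ < c * e s + K s * ((δ + c * (s - a)) * e s) := by
      rw [hfs]
      nlinarith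

theorem norm_le_gronwall_of_norm_deriv_right_le (hf : ContinuousOn f (Icc a b))
    (hf' : ∀ s ∈ Ico a b, HasDerivWithinAt f (f' s) (Ici s) s) (ha : ‖f a‖ ≤ δ)
    (hφ : ∀ s ∈ Icc a b, HasDerivAt φ (K s) s) (hK : ∀ s ∈ Icc a b, 0 ≤ K s) (hκ : 0 ≤ κ)
    (bound : ∀ s ∈ Ico a b, ‖f' s‖ ≤ κ + K s * ‖f s‖) :
    ∀ x ∈ Icc a b, ‖f x‖ ≤ (δ + κ * (x - a)) * exp (φ x - φ a) := by
  intro x hx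
  have hlim : Tendsto (fun c => (δ + c * (x - a)) * exp (φ x - φ a)) (𝓝[>] κ)
      (𝓝 ((δ + κ * (x - a)) * exp (φ x - φ a))) :=
    ((continuous_const.add (continuous_id.mul continuous_const)).mul continuous_const).tendsto κ
      |>.mono_left nhdsWithin_le_nhds
  refine ge_of_tendsto hlim (eventually_nhdsWithin_of_forall fun c hc => ?_)
  exact norm_le_gronwall_of_norm_deriv_right_le_of_lt hf hf' ha hφ hK bound
    (hκ.trans (le_of_lt hc)) hc x hx

theorem norm_sub_le_of_approx_solution_of_lipschitz_rate {g : E → ℝ → E} {u u' v : ℝ → E}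
    (hg : ∀ s ∈ Icc a b, ∀ x y, ‖g x s - g y s‖ ≤ K s * ‖x - y‖)
    (hφ : ∀ s ∈ Icc a b, HasDerivAt φ (K s) s) (hK : ∀ s ∈ Icc a b, 0 ≤ K s) (hκ : 0 ≤ κ)
    (hu : ∀ s ∈ Icc a b, HasDerivAt u (u' s) s) (hv : ∀ s ∈ Icc a b, HasDerivAt v (g (v s) s) s)
    (hdefect : ∀ s ∈ Icc a b, ‖u' s - g (u s) s‖ ≤ κ) (ha : ‖u a - v a‖ ≤ δ) :
    ∀ x ∈ Icc a b, ‖u x - v x‖ ≤ (δ + κ * (x - a)) * exp (φ x - φ a) := by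
  have hderiv : ∀ s ∈ Icc a b, HasDerivAt (fun s => u s - v s) (u' s - g (v s) s) s :=
    fun s hs => (hu s hs).sub (hv s hs)
  refine norm_le_gronwall_of_norm_deriv_right_le
    (fun s hs => (hderiv s hs).continuousAt.continuousWithinAt)
    (fun s hs => (hderiv s (Ico_subset_Icc_self hs)).hasDerivWithinAt) ha hφ hK hκ
    fun s hs => ?_
  have hs' := Ico_subset_Icc_self hs
  calc ‖u' s - g (v s) s‖ = ‖(u' s - g (u s) s) + (g (u s) s - g (v s) s)‖ := by
        rw [sub_add_sub_cancel]
    _ ≤ ‖u' s - g (u s) s‖ + ‖g (u s) s - g (v s) s‖ := norm_add_le _ _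
    _ ≤ κ + K s * ‖u s - v s‖ := add_le_add (hdefect s hs') (hg s hs' _ _)

end Gronwall

theorem diffedit_ode_perturbation_bound_general
    (d : ℕ) (τ K₁ κ₂ : ℝ) (hτ : 0 ≤ τ) (hK₁ : 0 ≤ K₁) (hκ₂ : 0 ≤ κ₂)
    (g : EuclideanSpace ℝ (Fin d) → ℝ → EuclideanSpace ℝ (Fin d))
    (hg : ∀ σ ∈ Set.Icc (0 : ℝ) τ, ∀ x y : EuclideanSpace ℝ (Fin d),
      ‖g x σ - g y σ‖ ≤ (K₁ / Real.sqrt (1 + σ ^ 2)) * ‖x - y‖)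
    (u v : ℝ → EuclideanSpace ℝ (Fin d))
    (u' : ℝ → EuclideanSpace ℝ (Fin d))
    (hu : ∀ σ ∈ Set.Icc (0 : ℝ) τ, HasDerivAt u (u' σ) σ)
    (hv : ∀ σ ∈ Set.Icc (0 : ℝ) τ, HasDerivAt v (g (v σ) σ) σ)
    (hend : u τ = v τ)
    (hdefect : ∀ σ ∈ Set.Icc (0 : ℝ) τ, ‖u' σ - g (u σ) σ‖ ≤ κ₂) :
    ‖u 0 - v 0‖ ≤ κ₂ * τ * (τ + Real.sqrt (τ ^ 2 + 1)) ^ K₁ := by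
  have hrev : ∀ s ∈ Icc 0 τ, τ - s ∈ Icc 0 τ := fun s hs => ⟨by linarith [hs.2], by linarith [hs.1]⟩
  have hφ : ∀ s, HasDerivAt (fun s => -(K₁ * arsinh (τ - s))) (K₁ / √(1 + (τ - s) ^ 2)) s :=
    fun s => (((hasDerivAt_arsinh (τ - s)).comp_const_sub τ s).const_mul K₁).neg.congr_deriv
      (by ring)
  have hbound := norm_sub_le_of_approx_solution_of_lipschitz_rate (a := 0) (b := τ) (δ := 0)
    (g := fun x s => -g x (τ - s)) (u := fun s => u (τ - s)) (v := fun s => v (τ - s))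
    (fun s hs x y => by simpa only [neg_sub_neg, norm_sub_rev] using hg _ (hrev s hs) x y)
    (fun s _ => hφ s) (fun s _ => by positivity) hκ₂
    (fun s hs => (hu _ (hrev s hs)).comp_const_sub τ s)
    (fun s hs => (hv _ (hrev s hs)).comp_const_sub τ s)
    (fun s hs => by simpa only [neg_sub_neg, norm_sub_rev] using hdefect _ (hrev s hs))
    (by simp [hend]) τ (right_mem_Icc.2 hτ)
  have hexp : exp (K₁ * arsinh τ) = (τ + √(τ ^ 2 + 1)) ^ K₁ := by
    rw [mul_comm, exp_mul, exp_arsinh, add_comm (τ ^ 2)]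
  simpa [hexp] using hbound

/-- DiffEdit ODE-perturbation bound: if `v` solves `v' = g(v, σ)` where `x ↦ g(x,σ)` is
`(K₁/√(1+σ²))`-Lipschitz, `u` is an approximate solution with defect
`‖u'(σ) − g(u(σ),σ)‖ ≤ κ₂`, and `u τ = v τ`, then
`‖u 0 − v 0‖ ≤ κ₂ τ (τ + √(τ²+1))^{K₁}`. -/
theorem diffedit_ode_perturbation_bound
    (d : ℕ) (hd : 1 ≤ d) (τ K₁ κ₂ : ℝ) (hτ : 0 ≤ τ) (hK₁ : 0 ≤ K₁) (hκ₂ : 0 ≤ κ₂)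
    (g : EuclideanSpace ℝ (Fin d) → ℝ → EuclideanSpace ℝ (Fin d))
    (hg : ∀ σ ∈ Set.Icc (0 : ℝ) τ, ∀ x y : EuclideanSpace ℝ (Fin d),
      ‖g x σ - g y σ‖ ≤ (K₁ / Real.sqrt (1 + σ ^ 2)) * ‖x - y‖)
    (u v : ℝ → EuclideanSpace ℝ (Fin d))
    (u' : ℝ → EuclideanSpace ℝ (Fin d))
    (hu : ∀ σ ∈ Set.Icc (0 : ℝ) τ, HasDerivAt u (u' σ) σ)
    (hv : ∀ σ ∈ Set.Icc (0 : ℝ) τ, HasDerivAt v (g (v σ) σ) σ)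
    (hend : u τ = v τ)
    (hdefect : ∀ σ ∈ Set.Icc (0 : ℝ) τ, ‖u' σ - g (u σ) σ‖ ≤ κ₂) :
    ‖u 0 - v 0‖ ≤ κ₂ * τ * (τ + Real.sqrt (τ ^ 2 + 1)) ^ K₁ :=
  diffedit_ode_perturbation_bound_general d τ K₁ κ₂ hτ hK₁ hκ₂ g hg u v u' hu hv hend hdefect
end

section
/- Let d ≥ 1, τ ≥ 0, K₁ ≥ 0, κ₂ ≥ 0. Let ε : ℝ^d × [0,τ] → ℝ^d be such that for every σ, the map x ↦ ε(x,σ) is K₁-Lipschitz, and let η : ℝ^d × [0,τ] → ℝ^d be arbitrary. Let u, v : [0,τ] → ℝ^d be differentiable with u(τ) = v(τ), u'(σ) = η(u(σ)/√(1+σ²), σ), v'(σ) = ε(v(σ)/√(1+σ²), σ), and suppose ‖η(u(σ)/√(1+σ²), σ) − ε(u(σ)/√(1+σ²), σ)‖ ≤ κ₂ for all σ ∈ [0,τ]. Then ‖u(0) − v(0)‖ ≤ κ₂ τ (τ + √(τ² + 1))^{K₁}. (This is the deterministic, per-example form of the DiffEdit bound of Proposition 1: since u(0) = x₀ and v(0)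 = D_r(E_r(x₀), Q), it bounds ‖x₀ − D_r(E_r(x₀), Q)‖.) -/
/-!
Reverse time: `w s = u (τ - s) - v (τ - s)` vanishes at `s = 0`, and the triangle inequality
together with the Lipschitz bound on `ε` gives `‖w' s‖ ≤ κ₂ + c s ‖w s‖` with the time-dependent
rate `c s = K₁ / √(1 + (τ - s)²)`. A Gronwall estimate with rate `c`, whose antiderivative is
`Φ s = -K₁ arsinh (τ - s)`, yields `‖w τ‖ ≤ κ₂ τ exp (K₁ arsinh τ)`, and
`exp (arsinh τ) = τ + √(τ² + 1)`.
-/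

open Real Set Filter Topology

section VariableRateGronwall

variable {E : Type*} [NormedAddCommGroup E] [NormedSpace ℝ E]
  {f f' : ℝ → E} {Φ c : ℝ → ℝ} {a b κ : ℝ}

theorem norm_le_add_mul_exp_of_norm_deriv_right_le_of_pos (hab : a ≤ b) (hκ : 0 ≤ κ)
    {δ : ℝ} (hδ : 0 < δ)
    (hf : ContinuousOn f (Icc a b)) (hf' : ∀ s ∈ Ico a b, HasDerivWithinAt f (f' s) (Ici s) s)
    (hΦ : ContinuousOn Φ (Icc a b)) (hΦ' : ∀ s ∈ Ico a b, HasDerivWithinAt Φ (c s) (Ici s) s)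
    (hΦa : ∀ s ∈ Ico a b, Φ a ≤ Φ s) (bound : ∀ s ∈ Ico a b, ‖f' s‖ ≤ κ + c s * ‖f s‖) :
    ‖f b‖ ≤ (‖f a‖ + (κ + δ) * (b - a + δ)) * exp (Φ b - Φ a) := by
  -- `δ > 0` makes `B` a strict barrier, as the fencing theorem requires.
  set B : ℝ → ℝ := fun s => (‖f a‖ + (κ + δ) * (s - a + δ)) * exp (Φ s - Φ a)
  have hB : ContinuousOn B (Icc a b) := by fun_prop
  have hB' : ∀ s ∈ Ico a b, HasDerivWithinAt B
      ((κ + δ) * exp (Φ s - Φ a) + c s * B s) (Ici s) s := by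
    intro s hs
    have hlin : HasDerivWithinAt (fun s => ‖f a‖ + (κ + δ) * (s - a + δ)) (κ + δ) (Ici s) s := by
      simpa using (((hasDerivWithinAt_id s _).sub_const a).add_const δ).const_mul (κ + δ)
        |>.const_add ‖f a‖
    exact (hlin.mul ((hΦ' s hs).sub_const (Φ a)).exp).congr_deriv (by ring)
  refine image_norm_le_of_norm_deriv_right_lt_deriv_boundary' hf hf' ?_ hB hB' ?_
    (right_mem_Icc.2 hab)
  · simp only [B, sub_self, exp_zero, mul_one]
    nlinarith
  · intro s hs hfs
    have : κ + δ ≤ (κ + δ) * exp (Φ s - Φ a) :=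
      le_mul_of_one_le_right (by positivity) (one_le_exp (sub_nonneg.2 (hΦa s hs)))
    calc ‖f' s‖ ≤ κ + c s * B s := hfs ▸ bound s hs
      _ < (κ + δ) * exp (Φ s - Φ a) + c s * B s := by linarith

theorem norm_le_add_mul_exp_of_norm_deriv_right_le (hab : a ≤ b) (hκ : 0 ≤ κ)
    (hf : ContinuousOn f (Icc a b)) (hf' : ∀ s ∈ Ico a b, HasDerivWithinAt f (f' s) (Ici s) s)
    (hΦ : ContinuousOn Φ (Icc a b)) (hΦ' : ∀ s ∈ Ico a b, HasDerivWithinAt Φ (c s) (Ici s) s)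
    (hΦa : ∀ s ∈ Ico a b, Φ a ≤ Φ s) (bound : ∀ s ∈ Ico a b, ‖f' s‖ ≤ κ + c s * ‖f s‖) :
    ‖f b‖ ≤ (‖f a‖ + κ * (b - a)) * exp (Φ b - Φ a) := by
  have hlim : Tendsto (fun δ => (‖f a‖ + (κ + δ) * (b - a + δ)) * exp (Φ b - Φ a)) (𝓝[>] 0)
      (𝓝 ((‖f a‖ + κ * (b - a)) * exp (Φ b - Φ a))) := by
    refine Tendsto.mono_left ?_ nhdsWithin_le_nhds
    have hcont : Continuous fun δ => (‖f a‖ + (κ + δ) * (b - a + δ)) * exp (Φ b - Φ a) := by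
      fun_prop
    simpa using hcont.tendsto 0
  exact ge_of_tendsto hlim (eventually_mem_nhdsWithin.mono fun δ hδ =>
    norm_le_add_mul_exp_of_norm_deriv_right_le_of_pos hab hκ hδ hf hf' hΦ hΦ' hΦa bound)

end VariableRateGronwall

theorem norm_sub_comp_smul_le {E F : Type*} [NormedAddCommGroup E] [NormedSpace ℝ E]
    [NormedAddCommGroup F] {g h : E → F} {K κ r : ℝ} {x y : E} (hr : 0 ≤ r)
    (hg : ∀ x y, ‖g x - g y‖ ≤ K * ‖x - y‖) (hdefect : ‖h (r • x) - g (r • x)‖ ≤ κ) :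
    ‖h (r • x) - g (r • y)‖ ≤ κ + K * r * ‖x - y‖ := by
  calc ‖h (r • x) - g (r • y)‖ ≤ ‖h (r • x) - g (r • x)‖ + ‖g (r • x) - g (r • y)‖ :=
        norm_sub_le_norm_sub_add_norm_sub _ _ _
    _ ≤ κ + K * ‖r • x - r • y‖ := add_le_add hdefect (hg _ _)
    _ = κ + K * r * ‖x - y‖ := by rw [← smul_sub, norm_smul, norm_of_nonneg hr, mul_assoc]

theorem add_sqrt_sq_add_one_rpow (x K : ℝ) : (x + √(x ^ 2 + 1)) ^ K = exp (K * arsinh x) := by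
  rw [mul_comm, exp_mul, exp_arsinh, add_comm (x ^ 2)]

theorem diffedit_per_example_bound_general
    (d : ℕ) (τ K₁ κ₂ : ℝ) (hτ : 0 ≤ τ) (hK₁ : 0 ≤ K₁) (hκ₂ : 0 ≤ κ₂)
    (ε η : EuclideanSpace ℝ (Fin d) → ℝ → EuclideanSpace ℝ (Fin d))
    (hε : ∀ σ ∈ Set.Icc (0 : ℝ) τ, ∀ x y : EuclideanSpace ℝ (Fin d),
      ‖ε x σ - ε y σ‖ ≤ K₁ * ‖x - y‖)
    (u v : ℝ → EuclideanSpace ℝ (Fin d))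
    (hu : ∀ σ ∈ Set.Icc (0 : ℝ) τ,
      HasDerivAt u (η ((Real.sqrt (1 + σ ^ 2))⁻¹ • u σ) σ) σ)
    (hv : ∀ σ ∈ Set.Icc (0 : ℝ) τ,
      HasDerivAt v (ε ((Real.sqrt (1 + σ ^ 2))⁻¹ • v σ) σ) σ)
    (hend : u τ = v τ)
    (hdefect : ∀ σ ∈ Set.Icc (0 : ℝ) τ,
      ‖η ((Real.sqrt (1 + σ ^ 2))⁻¹ • u σ) σ - ε ((Real.sqrt (1 + σ ^ 2))⁻¹ • u σ) σ‖ ≤ κ₂) :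
    ‖u 0 - v 0‖ ≤ κ₂ * τ * (τ + Real.sqrt (τ ^ 2 + 1)) ^ K₁ := by
  have hrefl : ∀ s ∈ Icc 0 τ, τ - s ∈ Icc 0 τ := fun s hs =>
    ⟨by linarith [hs.2], by linarith [hs.1]⟩
  have hw : ∀ s ∈ Icc 0 τ, HasDerivAt (fun s => u (τ - s) - v (τ - s))
      (-(η ((√(1 + (τ - s) ^ 2))⁻¹ • u (τ - s)) (τ - s)
        - ε ((√(1 + (τ - s) ^ 2))⁻¹ • v (τ - s)) (τ - s))) s := fun s hs =>
    (((hu _ (hrefl s hs)).comp_const_sub τ s).sub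
      ((hv _ (hrefl s hs)).comp_const_sub τ s)).congr_deriv (by abel)
  have hΦ : ∀ s, HasDerivAt (fun s => -(K₁ * arsinh (τ - s))) (K₁ * (√(1 + (τ - s) ^ 2))⁻¹) s :=
    fun s => (((hasDerivAt_id s).const_sub τ).arsinh.const_mul K₁).neg.congr_deriv (by simp)
  have hΦ_mono : ∀ s ∈ Ico 0 τ, -(K₁ * arsinh (τ - 0)) ≤ -(K₁ * arsinh (τ - s)) := fun s hs => by
    gcongr
    linarith [hs.1]
  have hbound : ∀ s ∈ Ico 0 τ, ‖-(η ((√(1 + (τ - s) ^ 2))⁻¹ • u (τ - s)) (τ - s)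
        - ε ((√(1 + (τ - s) ^ 2))⁻¹ • v (τ - s)) (τ - s))‖
      ≤ κ₂ + K₁ * (√(1 + (τ - s) ^ 2))⁻¹ * ‖u (τ - s) - v (τ - s)‖ := fun s hs => by
    have hσ := hrefl s (Ico_subset_Icc_self hs)
    rw [norm_neg]
    exact norm_sub_comp_smul_le (g := (ε · (τ - s))) (h := (η · (τ - s))) (by positivity)
      (hε _ hσ) (hdefect _ hσ)
  have := norm_le_add_mul_exp_of_norm_deriv_right_le hτ hκ₂
    (fun s hs => (hw s hs).continuousAt.continuousWithinAt)
    (fun s hs => (hw s (Ico_subset_Icc_self hs)).hasDerivWithinAt)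
    (fun s _ => (hΦ s).continuousAt.continuousWithinAt) (fun s _ => (hΦ s).hasDerivWithinAt)
    hΦ_mono hbound
  simpa only [sub_self, sub_zero, hend, norm_zero, zero_add, arsinh_zero, mul_zero, neg_zero,
    zero_sub, neg_neg, add_sqrt_sq_add_one_rpow] using this

/-- Deterministic, per-example form of the DiffEdit bound (Proposition 1): if `u` and `v`
solve `u' = η(u/√(1+σ²), σ)` and `v' = ε(v/√(1+σ²), σ)` respectively on `[0,τ]` with the
same terminal point `u τ = v τ`, where `x ↦ ε(x,σ)` is `K₁`-Lipschitz and the conditional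
and unconditional noise estimates differ by at most `κ₂` along the encoding trajectory,
then `‖u 0 − v 0‖ ≤ κ₂ τ (τ + √(τ²+1))^{K₁}`. -/
theorem diffedit_per_example_bound
    (d : ℕ) (hd : 1 ≤ d) (τ K₁ κ₂ : ℝ) (hτ : 0 ≤ τ) (hK₁ : 0 ≤ K₁) (hκ₂ : 0 ≤ κ₂)
    (ε η : EuclideanSpace ℝ (Fin d) → ℝ → EuclideanSpace ℝ (Fin d))
    (hε : ∀ σ ∈ Set.Icc (0 : ℝ) τ, ∀ x y : EuclideanSpace ℝ (Fin d),
      ‖ε x σ - ε y σ‖ ≤ K₁ * ‖x - y‖)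
    (u v : ℝ → EuclideanSpace ℝ (Fin d))
    (hu : ∀ σ ∈ Set.Icc (0 : ℝ) τ,
      HasDerivAt u (η ((Real.sqrt (1 + σ ^ 2))⁻¹ • u σ) σ) σ)
    (hv : ∀ σ ∈ Set.Icc (0 : ℝ) τ,
      HasDerivAt v (ε ((Real.sqrt (1 + σ ^ 2))⁻¹ • v σ) σ) σ)
    (hend : u τ = v τ)
    (hdefect : ∀ σ ∈ Set.Icc (0 : ℝ) τ,
      ‖η ((Real.sqrt (1 + σ ^ 2))⁻¹ • u σ) σ - ε ((Real.sqrt (1 + σ ^ 2))⁻¹ • u σ) σ‖ ≤ κ₂) :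
    ‖u 0 - v 0‖ ≤ κ₂ * τ * (τ + Real.sqrt (τ ^ 2 + 1)) ^ K₁ :=
  diffedit_per_example_bound_general d τ K₁ κ₂ hτ hK₁ hκ₂ ε η hε u v hu hv hend hdefect
end

section
/- Let C ≥ 0, K₁ ≥ 0, and 0 ≤ K₂ < C + 1. Then there exists τ₀ > 0 such that for all τ with 0 < τ ≤ τ₀, (K₂ τ / √(τ² + 1)) · (τ + √(τ² + 1))^{K₁} < (C + 1) τ. (That is, for sufficiently small noise level τ — i.e., sufficiently small encoding ratio — the DiffEdit bound is strictly tighter than the SDEdit bound.) -/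
/-!
The DiffEdit bound is `τ` times `K₂ / √(τ² + 1) · (τ + √(τ² + 1)) ^ K₁`, a factor continuous in `τ`
with value `K₂` at `τ = 0`, while the SDEdit bound is `τ` times the constant `C + 1 > K₂`. So the
factor stays below `C + 1` on some interval `(0, τ₀]`.
-/

open Filter Topology

theorem tendsto_div_sqrt_mul_rpow_nhds_zero (K₁ K₂ : ℝ) :
    Tendsto (fun τ : ℝ => K₂ / Real.sqrt (τ ^ 2 + 1) * (τ + Real.sqrt (τ ^ 2 + 1)) ^ K₁)
      (𝓝 0) (𝓝 K₂) := by
  have hcont : ContinuousAt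
      (fun τ : ℝ => K₂ / Real.sqrt (τ ^ 2 + 1) * (τ + Real.sqrt (τ ^ 2 + 1)) ^ K₁) 0 :=
    .mul (.div continuousAt_const (by fun_prop) (by simp))
      (.rpow_const (by fun_prop) (Or.inl (by simp)))
  simpa using hcont.tendsto

theorem diffedit_bound_tighter_small_tau_general
    (C K₁ K₂ : ℝ) (hK₂ : K₂ < C + 1) :
    ∃ τ₀ > (0 : ℝ), ∀ τ : ℝ, 0 < τ → τ ≤ τ₀ →
      K₂ * τ / Real.sqrt (τ ^ 2 + 1) * (τ + Real.sqrt (τ ^ 2 + 1)) ^ K₁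
        < (C + 1) * τ := by
  obtain ⟨τ₀, hτ₀, hsmall⟩ := mem_nhdsGT_iff_exists_Ioc_subset.1 <| nhdsWithin_le_nhds <|
    (tendsto_div_sqrt_mul_rpow_nhds_zero K₁ K₂).eventually_lt_const hK₂
  refine ⟨τ₀, hτ₀, fun τ hτ hττ₀ => ?_⟩
  calc K₂ * τ / Real.sqrt (τ ^ 2 + 1) * (τ + Real.sqrt (τ ^ 2 + 1)) ^ K₁
      = τ * (K₂ / Real.sqrt (τ ^ 2 + 1) * (τ + Real.sqrt (τ ^ 2 + 1)) ^ K₁) := by ring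
    _ < τ * (C + 1) := mul_lt_mul_of_pos_left (hsmall ⟨hτ, hττ₀⟩) hτ
    _ = (C + 1) * τ := mul_comm _ _

/-- For sufficiently small noise level `τ` (i.e. sufficiently small encoding ratio),
the DiffEdit bound `(K₂ τ/√(τ²+1)) (τ+√(τ²+1))^{K₁}` is strictly tighter than the
SDEdit bound `(C+1) τ`, whenever `K₂ < C + 1`. -/
theorem diffedit_bound_tighter_small_tau
    (C K₁ K₂ : ℝ) (hC : 0 ≤ C) (hK₁ : 0 ≤ K₁) (hK₂0 : 0 ≤ K₂) (hK₂ : K₂ < C + 1) :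
    ∃ τ₀ > (0 : ℝ), ∀ τ : ℝ, 0 < τ → τ ≤ τ₀ →
      K₂ * τ / Real.sqrt (τ ^ 2 + 1) * (τ + Real.sqrt (τ ^ 2 + 1)) ^ K₁
        < (C + 1) * τ :=
  diffedit_bound_tighter_small_tau_general C K₁ K₂ hK₂
end

section
/- Let C ≥ 0, K₂ > 0, and K₁ > 1. Then the ratio of the DiffEdit bound to the SDEdit bound, namely [(K₂ τ / √(τ² + 1)) (τ + √(τ² + 1))^{K₁}] / [(C + 1) τ] = (K₂/(C+1)) · (τ + √(τ² + 1))^{K₁} / √(τ² + 1), tends to +∞ as τ → +∞. (That is, for K₁ > 1 the asymptotic behavior of the DiffEdit bound is worse than that of the SDEdit bound.) -/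
/-!
Put `s = √(τ² + 1)`. Since `τ + s ≥ s`, the ratio is at least `(K₂/(C+1)) · s^(K₁ - 1)`,
and `s → ∞` with `τ` while `K₁ - 1 > 0`.
-/

open Filter

lemma Real.rpow_sub_one_le_rpow_div {s t K : ℝ} (hs : 0 < s) (hst : s ≤ t) (hK : 0 ≤ K) :
    s ^ (K - 1) ≤ t ^ K / s := by
  rw [Real.rpow_sub_one hs.ne']
  gcongr

lemma tendsto_sqrt_sq_add_one_atTop :
    Tendsto (fun τ : ℝ => Real.sqrt (τ ^ 2 + 1)) atTop atTop :=
  Real.tendsto_sqrt_atTop.comp <|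
    tendsto_atTop_add_const_right _ 1 (tendsto_pow_atTop two_ne_zero)

/-- For `K₁ > 1`, the ratio of the DiffEdit bound to the SDEdit bound,
`(K₂/(C+1)) (τ + √(τ²+1))^{K₁} / √(τ²+1)`, tends to `+∞` as `τ → +∞`:
asymptotically the DiffEdit bound is worse than the SDEdit bound. -/
theorem diffedit_bound_ratio_tendsto_atTop
    (C K₁ K₂ : ℝ) (hC : 0 ≤ C) (hK₂ : 0 < K₂) (hK₁ : 1 < K₁) :
    Tendsto
      (fun τ : ℝ =>
        K₂ / (C + 1) * (τ + Real.sqrt (τ ^ 2 + 1)) ^ K₁ / Real.sqrt (τ ^ 2 + 1))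
      atTop atTop := by
  have hc : 0 < K₂ / (C + 1) := by positivity
  have hlower : Tendsto (fun τ : ℝ => K₂ / (C + 1) * Real.sqrt (τ ^ 2 + 1) ^ (K₁ - 1))
      atTop atTop :=
    ((tendsto_rpow_atTop (by linarith)).comp tendsto_sqrt_sq_add_one_atTop).const_mul_atTop hc
  refine tendsto_atTop_mono' atTop ?_ hlower
  filter_upwards [eventually_ge_atTop 0] with τ hτ
  rw [mul_div_assoc]
  gcongr
  exact Real.rpow_sub_one_le_rpow_div (by positivity) (le_add_of_nonneg_left hτ) (by linarith)
end
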